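/- arXiv:2309.09366 — 2 statements merged into one kernel-verified Lean document; each statement's English description precedes it below -/
import Mathlib

section
/- Let $\Omega\subseteq\mathbb{R}^d$ have finite measure, and let $p,q:\Omega\to[1,\infty)$ be measurable with $q(x)\le p(x)\le p_+<\infty$. Define $s(x)=1/(p(x)-q(x))$ if $p(x)>q(x)$ and $s(x)=\infty$ otherwise. Assume that for all $a>1$, $\int_0^{|\Omega|} a^{s^*(w)}\,dw<\infty$. Then for any sequence $(E_n)$ of measurable subsets of $\Omega$ with $|E_n|\to 0$, $\|\chi_{E_n}\|_{L^{p(\cdot)q(\cdot)/(p(\cdot)-q(\cdot))}(\Omega)}\to 0$. -/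
open MeasureTheory Set Filter

/-- The variable exponent norm for an extended-real exponent `q : α → [1,∞]`,
where the modular is `∫_{q<∞} (|f|/λ)^{q(x)} dμ + ess sup_{q=∞} |f|/λ`. -/
noncomputable def vnormE {α : Type*} [MeasurableSpace α] (μ : Measure α)
    (q : α → ENNReal) (f : α → ℝ) : ℝ :=
  sInf {l : ℝ | 0 < l ∧
    (∫⁻ x in {x | q x ≠ ⊤}, ENNReal.ofReal (|f x| / l) ^ (q x).toReal ∂μ)
      + essSup (fun x => ENNReal.ofReal (|f x| / l)) (μ.restrict {x | q x = ⊤}) ≤ 1}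

/-- The exponent `P(·)Q(·)/(P(·)-Q(·))`, interpreted as `∞` where `P = Q`. -/
noncomputable def conjExp {α : Type*} (P Q : α → ℝ) (x : α) : ENNReal :=
  if P x = Q x then ⊤ else ENNReal.ofReal (P x * Q x / (P x - Q x))

/-- Decreasing rearrangement of an extended-real-valued function. -/
noncomputable def decRearrE {α : Type*} [MeasurableSpace α] (μ : Measure α)
    (s : α → ENNReal) (t : ℝ) : ENNReal :=
  sInf {b : ENNReal | μ {x | b < s x} ≤ ENNReal.ofReal t}

/-- `a^s` for `a > 1` and `s ∈ [0,∞]`, with the convention `a^∞ = ∞`. -/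
noncomputable def aexp (a : ℝ) (s : ENNReal) : ENNReal :=
  if s = ⊤ then ⊤ else ENNReal.ofReal (a ^ s.toReal)

namespace Stmt5Aux

variable {α : Type*} [MeasurableSpace α]

lemma aexp_le_aexp {a : ℝ} (ha : 1 ≤ a) {t u : ENNReal} (h : t ≤ u) : aexp a t ≤ aexp a u := by
  unfold aexp
  rcases eq_or_ne u ⊤ with hu | hu
  · simp [hu]
  · have ht : t ≠ ⊤ := fun h' => hu (top_le_iff.mp (h' ▸ h))
    rw [if_neg ht, if_neg hu]
    exact ENNReal.ofReal_le_ofReal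
      (Real.rpow_le_rpow_of_exponent_le ha (ENNReal.toReal_mono hu h))

lemma key (μ : Measure α) [IsFiniteMeasure μ] (s : α → ENNReal) {b : ℝ} (hb : 1 < b)
    {t : ENNReal} (ht : t ≠ ⊤) :
    ENNReal.ofReal (b ^ t.toReal) * μ {x | t < s x} ≤
      ∫⁻ w in Set.Ioo (0 : ℝ) (μ Set.univ).toReal, aexp b (decRearrE μ s w) := by
  set m := μ {x | t < s x} with hm
  have hmtop : m ≠ ⊤ := measure_ne_top μ _
  have hmc : m.toReal ≤ (μ Set.univ).toReal :=
    ENNReal.toReal_mono (measure_ne_top μ _) (measure_mono (Set.subset_univ _))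
  have hpt : ∀ w ∈ Set.Ioo (0:ℝ) m.toReal,
      ENNReal.ofReal (b ^ t.toReal) ≤ aexp b (decRearrE μ s w) := by
    intro w hw
    have hts : t ≤ decRearrE μ s w := by
      refine le_sInf fun b' hb' => ?_
      by_contra hlt
      push_neg at hlt
      have h1 : m ≤ μ {x | b' < s x} := measure_mono fun x hx => lt_trans hlt hx
      have h2 : ENNReal.ofReal w < m :=
        (ENNReal.ofReal_lt_iff_lt_toReal hw.1.le hmtop).mpr hw.2
      exact absurd (h1.trans hb') (not_le.mpr h2)
    calc ENNReal.ofReal (b ^ t.toReal) = aexp b t := by rw [aexp, if_neg ht]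
    _ ≤ aexp b (decRearrE μ s w) := aexp_le_aexp hb.le hts
  calc ENNReal.ofReal (b ^ t.toReal) * m
      = ∫⁻ w, (Set.Ioo (0:ℝ) m.toReal).indicator
          (fun _ => ENNReal.ofReal (b ^ t.toReal)) w := by
        rw [lintegral_indicator measurableSet_Ioo, setLIntegral_const, Real.volume_Ioo,
          sub_zero, ENNReal.ofReal_toReal hmtop]
    _ ≤ ∫⁻ w, (Set.Ioo (0:ℝ) (μ Set.univ).toReal).indicator
          (fun w => aexp b (decRearrE μ s w)) w := by
        refine lintegral_mono fun w => ?_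
        by_cases hw : w ∈ Set.Ioo (0:ℝ) m.toReal
        · rw [Set.indicator_of_mem hw, Set.indicator_of_mem (Set.mem_Ioo.mpr ⟨hw.1, lt_of_lt_of_le hw.2 hmc⟩)]
          exact hpt w hw
        · simp [Set.indicator_of_notMem hw]
    _ = _ := lintegral_indicator measurableSet_Ioo _

end Stmt5Aux

namespace Stmt5Aux2
open Stmt5Aux
variable {α : Type*} [MeasurableSpace α]

set_option maxHeartbeats 1000000 in
lemma fin (μ : Measure α) [IsFiniteMeasure μ] (s : α → ENNReal) (hsm : Measurable s)
    {a : ℝ} (ha : 1 < a)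
    (hint : ∀ b : ℝ, 1 < b →
      (∫⁻ w in Set.Ioo (0 : ℝ) (μ Set.univ).toReal, aexp b (decRearrE μ s w)) < ⊤) :
    (∫⁻ x, aexp a (s x) ∂μ) < ⊤ ∧ μ {x | s x = ⊤} = 0 := by
  have ha0 : 0 < a := lt_trans one_pos ha
  set b : ℝ := a ^ 2 with hbdef
  have hb : 1 < b := one_lt_pow₀ ha two_ne_zero
  have hb0 : 0 < b := lt_trans one_pos hb
  set C : ENNReal := ∫⁻ w in Set.Ioo (0 : ℝ) (μ Set.univ).toReal, aexp b (decRearrE μ s w)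
    with hCdef
  have hC : C ≠ ⊤ := (hint b hb).ne
  -- distribution bound
  have hmu : ∀ k : ℕ, μ {x | (k : ENNReal) < s x} ≤ (ENNReal.ofReal b⁻¹) ^ k * C := by
    intro k
    have hkey := key μ s hb (t := (k : ENNReal)) (by simp)
    rw [ENNReal.toReal_natCast, Real.rpow_natCast] at hkey
    have h1 : (ENNReal.ofReal b⁻¹) ^ k * ENNReal.ofReal (b ^ k) = 1 := by
      rw [← ENNReal.ofReal_pow (inv_nonneg.mpr hb0.le), ← ENNReal.ofReal_mul (by positivity),
        ← mul_pow, inv_mul_cancel₀ hb0.ne', one_pow, ENNReal.ofReal_one]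
    calc μ {x | (k : ENNReal) < s x}
        = (ENNReal.ofReal b⁻¹) ^ k * (ENNReal.ofReal (b ^ k) * μ {x | (k : ENNReal) < s x}) := by
          rw [← mul_assoc, h1, one_mul]
      _ ≤ (ENNReal.ofReal b⁻¹) ^ k * C := mul_le_mul_right hkey _
  -- measure of s = ⊤ is zero
  have htop : μ {x | s x = ⊤} = 0 := by
    have hle : ∀ k : ℕ, μ {x | s x = ⊤} ≤ (ENNReal.ofReal b⁻¹) ^ k * C := fun k =>
      le_trans (measure_mono fun x hx => by
        rw [Set.mem_setOf_eq] at hx ⊢; rw [hx]; exact ENNReal.natCast_lt_top k) (hmu k)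
    have hr1 : ENNReal.ofReal b⁻¹ < 1 := by
      rw [← ENNReal.ofReal_one]
      exact ENNReal.ofReal_lt_ofReal_iff_of_nonneg (by positivity) |>.mpr (inv_lt_one_of_one_lt₀ hb)
    have htend : Tendsto (fun k : ℕ => (ENNReal.ofReal b⁻¹) ^ k * C) atTop (nhds 0) := by
      have := ENNReal.Tendsto.mul_const
        (ENNReal.tendsto_pow_atTop_nhds_zero_of_lt_one hr1) (Or.inr hC)
      simpa using this
    exact le_zero_iff.mp (ge_of_tendsto' htend hle)
  refine ⟨?_, htop⟩
  -- cells
  set Ω : ℕ → Set α := fun k => {x | s x ≠ ⊤ ∧ (s x).toReal ∈ Set.Ico (k : ℝ) (k + 1)}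
    with hΩdef
  have hcover : {x | s x ≠ ⊤} ⊆ ⋃ k : ℕ, Ω k := by
    intro x hx
    exact Set.mem_iUnion.mpr ⟨⌊(s x).toReal⌋₊, hx,
      Nat.floor_le ENNReal.toReal_nonneg, Nat.lt_floor_add_one _⟩
  have hcell : ∀ k : ℕ, (∫⁻ x in Ω k, aexp a (s x) ∂μ) ≤
      ENNReal.ofReal (a ^ ((k : ℝ) + 1)) * μ (Ω k) := by
    intro k
    have : ∀ x ∈ Ω k, aexp a (s x) ≤ ENNReal.ofReal (a ^ ((k : ℝ) + 1)) := by
      intro x hx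
      rw [aexp, if_neg hx.1]
      exact ENNReal.ofReal_le_ofReal
        (Real.rpow_le_rpow_of_exponent_le ha.le hx.2.2.le)
    calc (∫⁻ x in Ω k, aexp a (s x) ∂μ)
        ≤ ∫⁻ _ in Ω k, ENNReal.ofReal (a ^ ((k : ℝ) + 1)) ∂μ :=
          setLIntegral_mono measurable_const this
      _ = ENNReal.ofReal (a ^ ((k : ℝ) + 1)) * μ (Ω k) := setLIntegral_const _ _
  have hΩsub : ∀ k : ℕ, Ω (k + 1) ⊆ {x | (k : ENNReal) < s x} := by
    intro k x hx
    have h1 : (k : ℝ) < (s x).toReal := by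
      have := hx.2.1
      push_cast at this ⊢
      linarith
    have : (k : ENNReal) = ENNReal.ofReal (k : ℝ) := by simp
    rw [Set.mem_setOf_eq, this, ← ENNReal.ofReal_toReal hx.1]
    exact ENNReal.ofReal_lt_ofReal_iff_of_nonneg (Nat.cast_nonneg _) |>.mpr h1
  set K : ENNReal := ENNReal.ofReal b * C + μ Set.univ with hKdef
  have hK : K ≠ ⊤ :=
    ENNReal.add_ne_top.mpr ⟨ENNReal.mul_ne_top ENNReal.ofReal_ne_top hC, measure_ne_top μ _⟩
  have hone : ENNReal.ofReal b⁻¹ * ENNReal.ofReal b = 1 := by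
    rw [← ENNReal.ofReal_mul (by positivity), inv_mul_cancel₀ hb0.ne', ENNReal.ofReal_one]
  have hΩmeas : ∀ k : ℕ, μ (Ω k) ≤ (ENNReal.ofReal b⁻¹) ^ k * K := by
    intro k
    match k with
    | 0 =>
      rw [pow_zero, one_mul, hKdef]
      exact le_trans (measure_mono (Set.subset_univ _)) le_add_self
    | (k+1) =>
      calc μ (Ω (k+1)) ≤ (ENNReal.ofReal b⁻¹) ^ k * C :=
            le_trans (measure_mono (hΩsub k)) (hmu k)
        _ = (ENNReal.ofReal b⁻¹) ^ (k+1) * (ENNReal.ofReal b * C) := by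
            rw [pow_succ, mul_assoc, ← mul_assoc (ENNReal.ofReal b⁻¹), hone, one_mul]
        _ ≤ (ENNReal.ofReal b⁻¹) ^ (k+1) * K := mul_le_mul_right le_self_add _
  have hterm : ∀ k : ℕ, (∫⁻ x in Ω k, aexp a (s x) ∂μ) ≤
      (ENNReal.ofReal a * K) * (ENNReal.ofReal a⁻¹) ^ k := by
    intro k
    calc (∫⁻ x in Ω k, aexp a (s x) ∂μ)
        ≤ ENNReal.ofReal (a ^ ((k : ℝ) + 1)) * μ (Ω k) := hcell k
      _ ≤ ENNReal.ofReal (a ^ ((k : ℝ) + 1)) * ((ENNReal.ofReal b⁻¹) ^ k * K) :=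
          mul_le_mul_right (hΩmeas k) _
      _ = (ENNReal.ofReal a * K) * (ENNReal.ofReal a⁻¹) ^ k := by
          have ha' : a ≠ 0 := ha0.ne'
          have hreal : a ^ ((k:ℝ) + 1) * b⁻¹ ^ k = a * a⁻¹ ^ k := by
            have hcast : ((k:ℝ) + 1) = ((k + 1 : ℕ) : ℝ) := by push_cast; ring
            rw [hcast, Real.rpow_natCast, hbdef]
            rw [inv_pow, inv_pow, ← pow_mul]
            field_simp
            ring
          rw [← ENNReal.ofReal_pow (by positivity : (0:ℝ) ≤ b⁻¹), ← mul_assoc,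
            ← ENNReal.ofReal_mul (by positivity), hreal, ENNReal.ofReal_mul ha0.le,
            ENNReal.ofReal_pow (by positivity : (0:ℝ) ≤ a⁻¹)]
          ring
  have hsplit : (∫⁻ x, aexp a (s x) ∂μ) ≤
      ∑' k : ℕ, (ENNReal.ofReal a * K) * (ENNReal.ofReal a⁻¹) ^ k := by
    calc (∫⁻ x, aexp a (s x) ∂μ)
        = ∫⁻ x in Set.univ, aexp a (s x) ∂μ := (setLIntegral_univ _).symm
      _ ≤ ∫⁻ x in {x | s x = ⊤} ∪ {x | s x ≠ ⊤}, aexp a (s x) ∂μ :=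
          lintegral_mono_set (by intro x _; by_cases h : s x = ⊤ <;> simp [h])
      _ ≤ (∫⁻ x in {x | s x = ⊤}, aexp a (s x) ∂μ)
            + ∫⁻ x in {x | s x ≠ ⊤}, aexp a (s x) ∂μ := lintegral_union_le _ _ _
      _ = ∫⁻ x in {x | s x ≠ ⊤}, aexp a (s x) ∂μ := by
          rw [Measure.restrict_eq_zero.mpr htop, lintegral_zero_measure, zero_add]
      _ ≤ ∫⁻ x in ⋃ k : ℕ, Ω k, aexp a (s x) ∂μ := lintegral_mono_set hcover
      _ ≤ ∑' k : ℕ, ∫⁻ x in Ω k, aexp a (s x) ∂μ := lintegral_iUnion_le _ _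
      _ ≤ ∑' k : ℕ, (ENNReal.ofReal a * K) * (ENNReal.ofReal a⁻¹) ^ k :=
          ENNReal.tsum_le_tsum hterm
  refine lt_of_le_of_lt hsplit ?_
  rw [ENNReal.tsum_mul_left, ENNReal.tsum_geometric]
  refine ENNReal.mul_lt_top (ENNReal.mul_lt_top ENNReal.ofReal_lt_top hK.lt_top) ?_
  rw [ENNReal.inv_lt_top, tsub_pos_iff_lt, ← ENNReal.ofReal_one]
  exact ENNReal.ofReal_lt_ofReal_iff_of_nonneg (by positivity) |>.mpr (inv_lt_one_of_one_lt₀ ha)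

end Stmt5Aux2

set_option maxHeartbeats 1000000 in
/-- If `s = 1/(P - Q)` (`= ∞` where `P = Q`) satisfies `∫₀^{|Ω|} a^{s^*(w)} dw < ∞`
for all `a > 1`, then `‖χ_{Eₙ}‖_{L^{PQ/(P-Q)}} → 0` whenever `|Eₙ| → 0`. -/
theorem stmt5 {α : Type*} [MeasurableSpace α] (μ : Measure α) [IsFiniteMeasure μ]
    (P Q : α → ℝ) (hP : Measurable P) (hQ : Measurable Q)
    (hQ1 : ∀ x, 1 ≤ Q x) (hQP : ∀ x, Q x ≤ P x)
    (pplus : ℝ) (hpplus : ∀ x, P x ≤ pplus)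
    (s : α → ENNReal)
    (hs : ∀ x, s x = if P x = Q x then ⊤ else ENNReal.ofReal (1 / (P x - Q x)))
    (hint : ∀ a : ℝ, 1 < a →
      (∫⁻ w in Set.Ioo (0 : ℝ) (μ Set.univ).toReal, aexp a (decRearrE μ s w)) < ⊤) :
    ∀ E : ℕ → Set α, (∀ n, MeasurableSet (E n)) →
      Tendsto (fun n => μ (E n)) atTop (nhds 0) →
      Tendsto (fun n => vnormE μ (conjExp P Q) ((E n).indicator fun _ => (1 : ℝ)))
        atTop (nhds 0) := by

  intro E hE hE0
  have hrtop : {x | conjExp P Q x = ⊤} = {x | s x = ⊤} := by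
    ext x
    simp only [Set.mem_setOf_eq, conjExp, hs x]
    by_cases h : P x = Q x <;> simp [h]
  have hsm : Measurable s := by
    have hfs : s = fun x => if P x = Q x then ⊤ else ENNReal.ofReal (1 / (P x - Q x)) :=
      funext hs
    rw [hfs]
    exact Measurable.ite (measurableSet_eq_fun hP hQ) measurable_const
      (ENNReal.measurable_ofReal.comp (measurable_const.div (hP.sub hQ)))
  rw [Metric.tendsto_atTop]
  intro ε hε
  set l : ℝ := min ε 1 / 2 with hldef
  have hl0 : 0 < l := by rw [hldef]; positivity
  have hlhalf : l ≤ 1 / 2 := by rw [hldef]; gcongr; exact min_le_right _ _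
  have hl1 : l < 1 := lt_of_le_of_lt hlhalf (by norm_num)
  have hlε : l < ε := by
    have h1 : l ≤ ε / 2 := by rw [hldef]; gcongr; exact min_le_left _ _
    linarith
  have hinv : 1 < l⁻¹ := (one_lt_inv₀ hl0).2 hl1
  set B : ℝ := max pplus 1 with hBdef
  have hB1 : (1:ℝ) ≤ B := le_max_right _ _
  have hB0 : (0:ℝ) < B := lt_of_lt_of_le one_pos hB1
  set a : ℝ := l⁻¹ ^ (B * B) with hadef
  have ha : 1 < a := by
    rw [hadef]
    exact Real.one_lt_rpow_iff_of_pos (by positivity) |>.mpr (Or.inl ⟨hinv, by positivity⟩)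
  have ha0 : (0:ℝ) < a := lt_trans one_pos ha
  set g : α → ENNReal := fun y => aexp a (s y) with hgdef
  have hgm : Measurable g := by
    have haux : (fun u : ENNReal => aexp a u) =
        fun u => if u = ⊤ then ⊤ else ENNReal.ofReal (Real.exp (Real.log a * u.toReal)) := by
      funext u
      rw [aexp]
      by_cases h : u = ⊤ <;> simp only [h, if_true, if_false]
      rw [Real.rpow_def_of_pos ha0]
    have : Measurable (fun u : ENNReal => aexp a u) := by
      rw [haux]
      exact Measurable.ite (measurableSet_singleton ⊤) measurable_const
        (ENNReal.measurable_ofReal.comp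
          (Real.measurable_exp.comp (ENNReal.measurable_toReal.const_mul _)))
    exact this.comp hsm
  obtain ⟨hfin, htop⟩ := Stmt5Aux2.fin μ s hsm ha hint
  have htopr : μ {x | conjExp P Q x = ⊤} = 0 := by rw [hrtop]; exact htop
  -- pointwise bound
  have hpt : ∀ n, ∀ x ∈ {x | conjExp P Q x ≠ ⊤},
      ENNReal.ofReal (|(E n).indicator (fun _ => (1:ℝ)) x| / l) ^ (conjExp P Q x).toReal ≤
        (E n).indicator g x := by
    intro n x hx
    have hne : P x ≠ Q x := by
      intro h
      exact hx (show conjExp P Q x = ⊤ by rw [conjExp, if_pos h])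
    have hQ0 : (0:ℝ) < Q x := lt_of_lt_of_le one_pos (hQ1 x)
    have hP0 : (0:ℝ) < P x := lt_of_lt_of_le hQ0 (hQP x)
    have hlt : Q x < P x := lt_of_le_of_ne (hQP x) (fun h => hne h.symm)
    have hd : (0:ℝ) < P x - Q x := sub_pos.mpr hlt
    have hrt : (conjExp P Q x).toReal = P x * Q x / (P x - Q x) := by
      rw [conjExp, if_neg hne, ENNReal.toReal_ofReal (by positivity)]
    by_cases hxE : x ∈ E n
    · rw [Set.indicator_of_mem hxE, Set.indicator_of_mem hxE]
      have hsx : s x = ENNReal.ofReal (1 / (P x - Q x)) := by rw [hs x, if_neg hne]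
      have hsnt : s x ≠ ⊤ := by rw [hsx]; exact ENNReal.ofReal_ne_top
      have hst : (s x).toReal = 1 / (P x - Q x) := by
        rw [hsx, ENNReal.toReal_ofReal (by positivity)]
      have hg : g x = ENNReal.ofReal (a ^ (1 / (P x - Q x))) := by
        rw [hgdef]; dsimp only; rw [aexp, if_neg hsnt, hst]
      have hexp : a ^ (1 / (P x - Q x)) = l⁻¹ ^ (B * B * (1 / (P x - Q x))) := by
        rw [hadef, ← Real.rpow_mul (inv_nonneg.mpr hl0.le)]
      have hePQ : P x * Q x / (P x - Q x) ≤ B * B * (1 / (P x - Q x)) := by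
        rw [mul_one_div]
        have hPB : P x ≤ B := le_trans (hpplus x) (le_max_left _ _)
        have hQB : Q x ≤ B := le_trans (hQP x) hPB
        gcongr
      rw [hg, hrt, abs_one, ENNReal.ofReal_rpow_of_pos (by positivity), hexp]
      refine ENNReal.ofReal_le_ofReal ?_
      rw [one_div l]
      exact Real.rpow_le_rpow_of_exponent_le hinv.le hePQ
    · rw [Set.indicator_of_notMem hxE, Set.indicator_of_notMem hxE]
      rw [abs_zero, zero_div, ENNReal.ofReal_zero, hrt,
        ENNReal.zero_rpow_of_pos (by positivity)]
  -- modular bound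
  have hmod : ∀ n, (∫⁻ x in {x | conjExp P Q x ≠ ⊤},
      ENNReal.ofReal (|(E n).indicator (fun _ => (1:ℝ)) x| / l) ^ (conjExp P Q x).toReal ∂μ) ≤
        ∫⁻ x in E n, g x ∂μ := by
    intro n
    calc (∫⁻ x in {x | conjExp P Q x ≠ ⊤},
          ENNReal.ofReal (|(E n).indicator (fun _ => (1:ℝ)) x| / l) ^ (conjExp P Q x).toReal ∂μ)
        ≤ ∫⁻ x in {x | conjExp P Q x ≠ ⊤}, (E n).indicator g x ∂μ :=
          setLIntegral_mono (hgm.indicator (hE n)) (hpt n)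
      _ ≤ ∫⁻ x, (E n).indicator g x ∂μ := setLIntegral_le_lintegral _ _
      _ = ∫⁻ x in E n, g x ∂μ := lintegral_indicator (hE n) g
  have hess : ∀ n, essSup (fun x => ENNReal.ofReal (|(E n).indicator (fun _ => (1:ℝ)) x| / l))
      (μ.restrict {x | conjExp P Q x = ⊤}) = 0 := by
    intro n
    rw [Measure.restrict_eq_zero.mpr htopr, essSup_measure_zero]
    rfl
  have htd : Tendsto (fun n => ∫⁻ x in E n, g x ∂μ) atTop (nhds 0) :=
    tendsto_setLIntegral_zero hfin.ne hE0
  have hev : ∀ᶠ n in atTop, (∫⁻ x in E n, g x ∂μ) < 1 :=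
    htd.eventually_lt_const zero_lt_one
  obtain ⟨N, hN⟩ := eventually_atTop.mp hev
  refine ⟨N, fun n hn => ?_⟩
  have hmem : l ∈ {l : ℝ | 0 < l ∧
      (∫⁻ x in {x | conjExp P Q x ≠ ⊤},
        ENNReal.ofReal (|(E n).indicator (fun _ => (1:ℝ)) x| / l) ^ (conjExp P Q x).toReal ∂μ)
        + essSup (fun x => ENNReal.ofReal (|(E n).indicator (fun _ => (1:ℝ)) x| / l))
            (μ.restrict {x | conjExp P Q x = ⊤}) ≤ 1} := by
    refine ⟨hl0, ?_⟩
    rw [hess n, add_zero]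
    exact le_trans (hmod n) (hN n hn).le
  have hle : vnormE μ (conjExp P Q) ((E n).indicator fun _ => (1:ℝ)) ≤ l :=
    csInf_le ⟨0, fun y hy => hy.1.le⟩ hmem
  have h0 : 0 ≤ vnormE μ (conjExp P Q) ((E n).indicator fun _ => (1:ℝ)) :=
    Real.sInf_nonneg (fun y hy => hy.1.le)
  rw [Real.dist_eq, sub_zero, abs_of_nonneg h0]
  exact lt_of_le_of_lt hle hlε
end

section
/- Let $1\le p<d$, $d\ge 2$, and let $q:B_a(0)\to[1,\infty)$ satisfy $q(x)\ge \frac{dp}{d-p}-\frac{C_0}{|\log(1/|x|)|}$ for a.e. $|x|<\eta_0$, with $a<\min(\eta_0,1)$. Let $\phi\in C_c^\infty(\mathbb{R}^d)$ with $\phi=1$ on $B_{1/2}(0)$ and $\operatorname{supp}\phi\subseteq B_1(0)$, and set $\phi_n(x)=n^{(d-p)/p}\phi(nx)$. Then there exists $\delta>0$ (independent of $n$) with $0<\delta<e^{-C_0(d-p)/p}\nu_d/2^d$ such that for all sufficiently large $n$, $\|\chi_{\{x:\phi(nx)=1\}}\|_{L^{q(\cdot)}}\ge \delta\, n^{-(d-p)/p}$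 and consequently $\|\phi_n\|_{L^{q(\cdot),p}}\ge \delta/p^{1/p}>0$. -/
open MeasureTheory Set Metric Filter

/-- Euclidean space `ℝ^d`. -/
abbrev Euc (d : ℕ) := EuclideanSpace ℝ (Fin d)

/-- Volume of the unit ball in `ℝ^d`. -/
noncomputable def nu (d : ℕ) : ℝ := (volume (Metric.ball (0 : Euc d) 1)).toReal

/-- The variable exponent Lebesgue norm
`‖f‖_{L^{q(·)}(μ)} = inf {λ > 0 : ∫ (|f|/λ)^{q(x)} dμ ≤ 1}`. -/
noncomputable def vnorm {α : Type*} [MeasurableSpace α] (μ : Measure α) (q : α → ℝ)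
    {F : Type*} [NormedAddCommGroup F] (f : α → F) : ℝ :=
  sInf {l : ℝ | 0 < l ∧ (∫⁻ x, ENNReal.ofReal (‖f x‖ / l) ^ q x ∂μ) ≤ 1}

/-- The variable exponent Lorentz norm
`‖f‖_{L^{q(·),p}(μ)} = (∫_0^∞ λ^{p-1} ‖χ_{{|f|>λ}}‖_{L^{q(·)}}^p dλ)^{1/p}`. -/
noncomputable def lorentz {α : Type*} [MeasurableSpace α] (μ : Measure α) (q : α → ℝ)
    (p : ℝ) {F : Type*} [NormedAddCommGroup F] (f : α → F) : ℝ :=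
  (∫ l in Set.Ioi (0 : ℝ),
      l ^ (p - 1) * vnorm μ q ({x | l < ‖f x‖}.indicator fun _ => (1 : ℝ)) ^ p) ^ (1 / p)

open ENNReal
lemma vnorm_nonneg' {α : Type*} [MeasurableSpace α] (μ : Measure α) (q : α → ℝ)
    {F : Type*} [NormedAddCommGroup F] (f : α → F) : 0 ≤ vnorm μ q f :=
  Real.sInf_nonneg (fun _ hl => hl.1.le)

/-- Big constant belongs to the admissible set, for bounded-by-1 functions. -/
lemma mem_vset {α : Type*} [MeasurableSpace α] (μ : Measure α) (hμ : μ Set.univ ≠ ⊤)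
    (q : α → ℝ) (hq : ∀ᵐ x ∂μ, 1 ≤ q x)
    {F : Type*} [NormedAddCommGroup F] (f : α → F) (hf : ∀ x, ‖f x‖ ≤ 1) :
    ((μ Set.univ).toReal + 1) ∈
      {l : ℝ | 0 < l ∧ (∫⁻ x, ENNReal.ofReal (‖f x‖ / l) ^ q x ∂μ) ≤ 1} := by
  set L : ℝ := (μ Set.univ).toReal + 1 with hL
  have htR : 0 ≤ (μ Set.univ).toReal := ENNReal.toReal_nonneg
  have hL1 : 1 ≤ L := by simp only [hL]; linarith
  have hL0 : 0 < L := by linarith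
  refine ⟨hL0, ?_⟩
  have hpt : ∀ᵐ x ∂μ, ENNReal.ofReal (‖f x‖ / L) ^ q x ≤ ENNReal.ofReal (1 / L) := by
    filter_upwards [hq] with x hx
    have h1 : ENNReal.ofReal (‖f x‖ / L) ≤ 1 := by
      rw [show (1 : ℝ≥0∞) = ENNReal.ofReal 1 by simp]
      apply ENNReal.ofReal_le_ofReal
      rw [div_le_one hL0]; exact le_trans (hf x) hL1
    calc ENNReal.ofReal (‖f x‖ / L) ^ q x ≤ ENNReal.ofReal (‖f x‖ / L) ^ (1:ℝ) :=
          ENNReal.rpow_le_rpow_of_exponent_ge h1 hx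
      _ = ENNReal.ofReal (‖f x‖ / L) := ENNReal.rpow_one _
      _ ≤ ENNReal.ofReal (1 / L) := by
          apply ENNReal.ofReal_le_ofReal
          gcongr
          exact hf x
  calc (∫⁻ x, ENNReal.ofReal (‖f x‖ / L) ^ q x ∂μ)
      ≤ ∫⁻ _, ENNReal.ofReal (1 / L) ∂μ := lintegral_mono_ae hpt
    _ = ENNReal.ofReal (1 / L) * μ Set.univ := lintegral_const _
    _ ≤ 1 := by
        rw [← ENNReal.ofReal_toReal hμ, ← ENNReal.ofReal_mul (by positivity)]
        rw [ENNReal.ofReal_le_one]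
        rw [one_div, inv_mul_le_iff₀ hL0]
        linarith

/-- Monotonicity of the variable exponent norm. -/
lemma vnorm_mono' {α : Type*} [MeasurableSpace α] (μ : Measure α) (q : α → ℝ)
    (hq : ∀ᵐ x ∂μ, 0 ≤ q x)
    {F : Type*} [NormedAddCommGroup F] (f g : α → F) (h : ∀ x, ‖f x‖ ≤ ‖g x‖)
    (hne : {l : ℝ | 0 < l ∧ (∫⁻ x, ENNReal.ofReal (‖g x‖ / l) ^ q x ∂μ) ≤ 1}.Nonempty) :
    vnorm μ q f ≤ vnorm μ q g := by
  apply csInf_le_csInf ⟨0, fun x hx => hx.1.le⟩ hne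
  rintro l ⟨hl0, hl1⟩
  refine ⟨hl0, le_trans (lintegral_mono_ae ?_) hl1⟩
  filter_upwards [hq] with x hx
  apply ENNReal.rpow_le_rpow _ hx
  apply ENNReal.ofReal_le_ofReal
  gcongr
  exact h x


set_option maxHeartbeats 1000000 in
/-- Lower bound for the rescaled bump functions: there is `δ > 0` (independent
of `n`), `δ < e^{-C₀(d-p)/p} ν_d / 2^d`, with
`‖χ_{{φ(n·)=1}}‖_{L^{q(·)}} ≥ δ n^{-(d-p)/p}` and `‖φₙ‖_{L^{q(·),p}} ≥ δ / p^{1/p}`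
for all large `n`. -/
theorem stmt12 (d : ℕ) (hd : 2 ≤ d) (p : ℝ) (hp1 : 1 ≤ p) (hpd : p < d)
    (C0 η0 a : ℝ) (hC0 : 0 < C0) (hη0 : 0 < η0) (ha0 : 0 < a)
    (ha : a < min η0 1)
    (q : Euc d → ℝ) (hqm : Measurable q)
    (hq : ∀ᵐ x ∂(volume.restrict (Metric.ball (0 : Euc d) a)),
      1 ≤ q x ∧ q x ≤ d * p / (d - p))
    (hnear : ∀ᵐ x ∂(volume.restrict (Metric.ball (0 : Euc d) a)), ‖x‖ < η0 →
      d * p / (d - p) - C0 / |Real.log (1 / ‖x‖)| ≤ q x)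
    (φ : Euc d → ℝ) (hφ : ContDiff ℝ (⊤ : ℕ∞) φ) (hφc : HasCompactSupport φ)
    (hφ1 : ∀ x ∈ Metric.closedBall (0 : Euc d) (1 / 2), φ x = 1)
    (hφs : tsupport φ ⊆ Metric.closedBall (0 : Euc d) 1) :
    ∃ δ : ℝ, 0 < δ ∧ δ < Real.exp (-C0 * ((d : ℝ) - p) / p) * nu d / 2 ^ d ∧
      ∃ N : ℕ, ∀ n : ℕ, N ≤ n →
        δ * (n : ℝ) ^ (-(((d : ℝ) - p) / p))
            ≤ vnorm (volume.restrict (Metric.ball (0 : Euc d) a)) q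
                ({x : Euc d | φ ((n : ℝ) • x) = 1}.indicator fun _ => (1 : ℝ)) ∧
          δ / p ^ (1 / p)
            ≤ lorentz (volume.restrict (Metric.ball (0 : Euc d) a)) q p
                (fun x => (n : ℝ) ^ (((d : ℝ) - p) / p) * φ ((n : ℝ) • x)) := by
  haveI : NeZero d := ⟨by omega⟩
  have hp0 : (0:ℝ) < p := by linarith
  have hd2 : (2:ℝ) ≤ (d:ℝ) := by exact_mod_cast hd
  have hdp : 0 < (d:ℝ) - p := by linarith
  have ha1 : a < 1 := lt_of_lt_of_le ha (min_le_right _ _)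
  have haη : a < η0 := lt_of_lt_of_le ha (min_le_left _ _)
  set γ : ℝ := ((d:ℝ) - p) / p with hγdef
  have hγ0 : 0 < γ := div_pos hdp hp0
  have hγd : γ * ((d:ℝ) * p / ((d:ℝ) - p)) = (d:ℝ) := by
    rw [hγdef]; field_simp
  have hνpos : 0 < nu d := by
    have h1 : (0:ℝ≥0∞) < volume (Metric.ball (0 : Euc d) 1) :=
      measure_ball_pos _ _ one_pos
    exact ENNReal.toReal_pos h1.ne' measure_ball_lt_top.ne
  set K : ℝ := Real.exp (-C0 * ((d : ℝ) - p) / p) * nu d / 2 ^ d with hKdef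
  have hK0 : 0 < K := by positivity
  set δ : ℝ := min K 1 / 2 with hδdef
  have hδ0 : 0 < δ := by
    rw [hδdef]; have := lt_min hK0 one_pos; linarith
  have hδK : δ < K := by
    have : min K 1 ≤ K := min_le_left _ _
    rw [hδdef]; linarith
  have hδ1 : δ ≤ 1 / 2 := by
    have : min K 1 ≤ 1 := min_le_right _ _
    rw [hδdef]; linarith
  set μ := volume.restrict (Metric.ball (0 : Euc d) a) with hμdef
  have hμfin : μ Set.univ ≠ ⊤ := by
    rw [hμdef, Measure.restrict_apply_univ]; exact measure_ball_lt_top.ne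
  have hq1 : ∀ᵐ x ∂μ, 1 ≤ q x := hq.mono fun x hx => hx.1
  have hq0 : ∀ᵐ x ∂μ, 0 ≤ q x := hq1.mono fun x hx => le_trans zero_le_one hx
  set L : ℝ := (μ Set.univ).toReal + 1 with hLdef
  have hL1 : 1 ≤ L := by
    have := ENNReal.toReal_nonneg (a := μ Set.univ); rw [hLdef]; linarith
  have hbd1 : ∀ (s : Set (Euc d)) (x : Euc d),
      ‖s.indicator (fun _ => (1:ℝ)) x‖ ≤ 1 := by
    intro s x
    by_cases hx : x ∈ s
    · simp [Set.indicator_of_mem hx]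
    · simp [Set.indicator_of_notMem hx]
  have hind : ∀ (s t : Set (Euc d)), s ⊆ t → ∀ x : Euc d,
      ‖s.indicator (fun _ => (1:ℝ)) x‖ ≤ ‖t.indicator (fun _ => (1:ℝ)) x‖ := by
    intro s t hst x
    by_cases hx : x ∈ s
    · simp [Set.indicator_of_mem hx, Set.indicator_of_mem (hst hx)]
    · simp [Set.indicator_of_notMem hx]
  have hne : ∀ s : Set (Euc d),
      {l : ℝ | 0 < l ∧
        (∫⁻ x, ENNReal.ofReal (‖s.indicator (fun _ => (1:ℝ)) x‖ / l) ^ q x ∂μ) ≤ 1}.Nonempty :=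
    fun s => ⟨L, mem_vset μ hμfin q hq1 _ (hbd1 s)⟩
  have hvL : ∀ s : Set (Euc d), vnorm μ q (s.indicator (fun _ => (1:ℝ))) ≤ L :=
    fun s => csInf_le ⟨0, fun x hx => hx.1.le⟩ (mem_vset μ hμfin q hq1 _ (hbd1 s))
  obtain ⟨Cφ, hCφ⟩ := hφc.exists_bound_of_continuous hφ.continuous
  have hCφ0 : (0:ℝ) ≤ Cφ := le_trans (norm_nonneg _) (hCφ 0)
  refine ⟨δ, hδ0, hδK, max 2 ⌈1/(2*a)⌉₊, ?_⟩
  intro n hn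
  have hn2 : (2:ℝ) ≤ (n:ℝ) := by
    have : 2 ≤ n := le_trans (le_max_left _ _) hn
    exact_mod_cast this
  have hn0 : (0:ℝ) < n := by linarith
  have hn1 : (1:ℝ) ≤ n := by linarith
  set r : ℝ := 1/(2*(n:ℝ)) with hrdef
  have hr0 : 0 < r := by rw [hrdef]; positivity
  have hnr : (n:ℝ) * r = 1/2 := by rw [hrdef]; field_simp
  have hra : r ≤ a := by
    have hceil : (⌈1/(2*a)⌉₊ : ℝ) ≤ n := by
      exact_mod_cast le_trans (le_max_right 2 _) hn
    have h1 : 1/(2*a) ≤ (n:ℝ) := le_trans (Nat.le_ceil _) hceil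
    rw [hrdef, div_le_iff₀ (by positivity)]
    rw [div_le_iff₀ (by positivity)] at h1
    have h2 : (n:ℝ) * (2*a) = a * (2*(n:ℝ)) := by ring
    linarith
  set A : Set (Euc d) := {x : Euc d | φ ((n : ℝ) • x) = 1} with hAdef
  set fA := A.indicator (fun _ => (1:ℝ)) with hfAdef
  set T : ℝ := (n:ℝ)^γ with hTdef
  have hT0 : 0 < T := Real.rpow_pos_of_pos hn0 γ
  -- membership in A for points of the small ball
  have hball_mem : ∀ x : Euc d, ‖x‖ < r → x ∈ A := by
    intro x hxr
    rw [hAdef, Set.mem_setOf_eq]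
    apply hφ1
    rw [Metric.mem_closedBall, dist_zero_right, norm_smul, Real.norm_eq_abs,
      abs_of_nonneg hn0.le]
    have h2 : (n:ℝ) * ‖x‖ < (n:ℝ) * r := mul_lt_mul_of_pos_left hxr hn0
    rw [hnr] at h2
    linarith
  -- the key lower bound for admissible constants
  have key : ∀ l : ℝ,
      l ∈ {l : ℝ | 0 < l ∧ (∫⁻ x, ENNReal.ofReal (‖fA x‖ / l) ^ q x ∂μ) ≤ 1} →
      δ * (n:ℝ) ^ (-γ) ≤ l := by
    rintro l ⟨hl0, hl1⟩
    by_contra hcon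
    push_neg at hcon
    have hinv : T/δ ≤ 1/l := by
      have h1 : l < δ * T⁻¹ := by
        rw [hTdef]; rwa [Real.rpow_neg hn0.le] at hcon
      have h2 : T⁻¹ * T = 1 := inv_mul_cancel₀ hT0.ne'
      rw [div_le_div_iff₀ hδ0 hl0]
      have h3 : T * l ≤ T * (δ * T⁻¹) := mul_le_mul_of_nonneg_left h1.le hT0.le
      have h4 : T * (δ * T⁻¹) = δ * (T⁻¹ * T) := by ring
      rw [h2, mul_one] at h4
      linarith
    set c : ℝ := δ⁻¹ * Real.exp (-(γ*C0)) * (n:ℝ)^d with hcdef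
    have hx0ae : ∀ᵐ x ∂μ, x ≠ 0 := by
      rw [hμdef]
      apply ae_restrict_of_ae
      rw [ae_iff]
      simpa using measure_singleton (0 : Euc d)
    have hpt : ∀ᵐ x ∂μ, x ∈ Metric.ball (0:Euc d) r →
        ENNReal.ofReal c ≤ ENNReal.ofReal (‖fA x‖ / l) ^ q x := by
      filter_upwards [hq, hnear, hx0ae] with x hx1 hx2 hx3 hxB
      have hxr : ‖x‖ < r := by rwa [mem_ball_zero_iff] at hxB
      have hxpos : 0 < ‖x‖ := norm_pos_iff.mpr hx3
      have hxA : x ∈ A := hball_mem x hxr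
      have hfA1 : ‖fA x‖ = 1 := by
        rw [hfAdef, Set.indicator_of_mem hxA]; simp
      rw [hfA1]
      have h1l : 0 < 1/l := by positivity
      rw [ENNReal.ofReal_rpow_of_pos h1l]
      apply ENNReal.ofReal_le_ofReal
      set Q := q x with hQdef
      have hQ1 : 1 ≤ Q := hx1.1
      have hQ0 : 0 ≤ Q := by linarith
      have hLlog : Real.log (n:ℝ) ≤ Real.log (1/‖x‖) := by
        apply Real.log_le_log hn0
        rw [le_div_iff₀ hxpos]
        have h2 : (n:ℝ) * ‖x‖ < (n:ℝ) * r := mul_lt_mul_of_pos_left hxr hn0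
        rw [hnr] at h2
        linarith
      have hlogn : 0 < Real.log (n:ℝ) := Real.log_pos (by linarith)
      have hLpos : 0 < Real.log (1/‖x‖) := lt_of_lt_of_le hlogn hLlog
      have hqx : (d:ℝ)*p/((d:ℝ)-p) - C0/Real.log (1/‖x‖) ≤ Q := by
        have := hx2 (by linarith [hra, haη] : ‖x‖ < η0)
        rwa [abs_of_pos hLpos] at this
      have hexpo : (d:ℝ) - γ*C0/Real.log (1/‖x‖) ≤ γ * Q := by
        have h := mul_le_mul_of_nonneg_left hqx hγ0.le
        rw [mul_sub, hγd] at h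
        have h9 : γ * (C0 / Real.log (1/‖x‖)) = γ * C0 / Real.log (1/‖x‖) := by ring
        linarith [h, h9.le]
      have h5 : (n:ℝ)^((d:ℝ)) * Real.exp (-(γ*C0)) ≤ (n:ℝ)^(γ*Q) := by
        have hstep : (n:ℝ)^((d:ℝ) - γ*C0/Real.log (1/‖x‖)) ≤ (n:ℝ)^(γ*Q) :=
          Real.rpow_le_rpow_of_exponent_le hn1 hexpo
        have hsplit : (n:ℝ)^((d:ℝ) - γ*C0/Real.log (1/‖x‖))
            = (n:ℝ)^((d:ℝ)) / (n:ℝ)^(γ*C0/Real.log (1/‖x‖)) := Real.rpow_sub hn0 _ _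
        have hupper : (n:ℝ)^(γ*C0/Real.log (1/‖x‖)) ≤ Real.exp (γ*C0) := by
          rw [Real.rpow_def_of_pos hn0]
          apply Real.exp_le_exp.2
          have h10 : Real.log (n:ℝ) * (γ*C0/Real.log (1/‖x‖))
              = (γ*C0) * (Real.log (n:ℝ)/Real.log (1/‖x‖)) := by ring
          rw [h10]
          have h11 : Real.log (n:ℝ)/Real.log (1/‖x‖) ≤ 1 := by
            rw [div_le_one hLpos]; exact hLlog
          have h12 := mul_le_mul_of_nonneg_left h11 (by positivity : (0:ℝ) ≤ γ*C0)
          linarith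
        have hNpos : 0 < (n:ℝ)^(γ*C0/Real.log (1/‖x‖)) := Real.rpow_pos_of_pos hn0 _
        calc (n:ℝ)^((d:ℝ)) * Real.exp (-(γ*C0))
            = (n:ℝ)^((d:ℝ)) / Real.exp (γ*C0) := by
              rw [Real.exp_neg]; ring
          _ ≤ (n:ℝ)^((d:ℝ)) / (n:ℝ)^(γ*C0/Real.log (1/‖x‖)) := by gcongr
          _ ≤ (n:ℝ)^(γ*Q) := by rw [← hsplit]; exact hstep
      have h6 : δ^Q ≤ δ := by
        have := Real.rpow_le_rpow_of_exponent_ge hδ0 (by linarith) hQ1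
        rwa [Real.rpow_one] at this
      have h7 : 0 < δ^Q := Real.rpow_pos_of_pos hδ0 _
      calc c = ((n:ℝ)^((d:ℝ)) * Real.exp (-(γ*C0))) / δ := by
            rw [hcdef, Real.rpow_natCast]; field_simp; try ring
        _ ≤ (n:ℝ)^(γ*Q) / δ := by gcongr
        _ ≤ (n:ℝ)^(γ*Q) / δ^Q := by gcongr
        _ = ((n:ℝ)^γ)^Q / δ^Q := by rw [← Real.rpow_mul hn0.le]
        _ = ((n:ℝ)^γ/δ)^Q := (Real.div_rpow (Real.rpow_pos_of_pos hn0 γ).le hδ0.le Q).symm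
        _ ≤ (1/l)^Q := by
            apply Real.rpow_le_rpow (by positivity) _ hQ0
            rw [← hTdef]; exact hinv
    have hBsub : Metric.ball (0:Euc d) r ⊆ Metric.ball (0:Euc d) a :=
      Metric.ball_subset_ball hra
    have hmod : ENNReal.ofReal c * μ (Metric.ball (0:Euc d) r) ≤ 1 := by
      calc ENNReal.ofReal c * μ (Metric.ball (0:Euc d) r)
          = ∫⁻ _ in Metric.ball (0:Euc d) r, ENNReal.ofReal c ∂μ :=
            (setLIntegral_const _ _).symm
        _ ≤ ∫⁻ x in Metric.ball (0:Euc d) r, ENNReal.ofReal (‖fA x‖ / l) ^ q x ∂μ := by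
            apply lintegral_mono_ae
            filter_upwards [ae_restrict_of_ae hpt, ae_restrict_mem measurableSet_ball]
              with x h1 h2
            exact h1 h2
        _ ≤ ∫⁻ x, ENNReal.ofReal (‖fA x‖ / l) ^ q x ∂μ := setLIntegral_le_lintegral _ _
        _ ≤ 1 := hl1
    have hμB : μ (Metric.ball (0:Euc d) r) = ENNReal.ofReal (r^d * nu d) := by
      rw [hμdef, Measure.restrict_apply measurableSet_ball,
        Set.inter_eq_self_of_subset_left hBsub]
      rw [Measure.addHaar_ball volume (0:Euc d) hr0.le]
      rw [show Module.finrank ℝ (Euc d) = d from finrank_euclideanSpace_fin]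
      rw [show volume (Metric.ball (0:Euc d) 1) = ENNReal.ofReal (nu d) from
        (ENNReal.ofReal_toReal measure_ball_lt_top.ne).symm]
      rw [← ENNReal.ofReal_mul (by positivity)]
    have hgt : (1:ℝ≥0∞) < ENNReal.ofReal c * μ (Metric.ball (0:Euc d) r) := by
      rw [hμB, ← ENNReal.ofReal_mul (by positivity), ENNReal.one_lt_ofReal]
      have hnd : (n:ℝ)^d * r^d = (1/2:ℝ)^d := by
        rw [← mul_pow, hnr]
      have hexpEq : Real.exp (-C0 * ((d:ℝ)-p)/p) = Real.exp (-(γ*C0)) := by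
        rw [hγdef]; ring_nf
      have h2pow : (0:ℝ) < 2^d := by positivity
      have hKval : δ * (c * (r^d * nu d)) = K := by
        have hδδ : δ * δ⁻¹ = 1 := mul_inv_cancel₀ hδ0.ne'
        have h1 : δ * (c * (r^d * nu d))
            = (δ * δ⁻¹) * (Real.exp (-(γ*C0)) * (((n:ℝ)^d * r^d) * nu d)) := by
          rw [hcdef]; ring
        rw [h1, hδδ, one_mul, hnd, hKdef, hexpEq, div_pow, one_pow]
        ring
      have : δ * 1 < δ * (c * (r^d * nu d)) := by
        rw [hKval, mul_one]; exact hδK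
      exact lt_of_mul_lt_mul_left this hδ0.le
    exact absurd hmod hgt.not_ge
  have part1 : δ * (n:ℝ) ^ (-γ) ≤ vnorm μ q fA := le_csInf (hne A) key
  refine ⟨part1, ?_⟩
  -- Part 2: the Lorentz norm bound
  set fn : Euc d → ℝ := fun x => T * φ ((n:ℝ) • x) with hfndef
  have hVanti : Antitone (fun l : ℝ =>
      vnorm μ q ({x : Euc d | l < ‖fn x‖}.indicator fun _ => (1:ℝ))) := by
    intro l₁ l₂ h
    exact vnorm_mono' μ q hq0 _ _
      (hind _ _ (fun x hx => lt_of_le_of_lt h hx)) (hne _)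
  have hVmeas : Measurable (fun l : ℝ =>
      vnorm μ q ({x : Euc d | l < ‖fn x‖}.indicator fun _ => (1:ℝ))) := hVanti.measurable
  have hVnn : ∀ l : ℝ,
      0 ≤ vnorm μ q ({x : Euc d | l < ‖fn x‖}.indicator fun _ => (1:ℝ)) :=
    fun _ => vnorm_nonneg' μ q _
  have hVle : ∀ l : ℝ,
      vnorm μ q ({x : Euc d | l < ‖fn x‖}.indicator fun _ => (1:ℝ)) ≤ L :=
    fun _ => hvL _
  have hVlow : ∀ l : ℝ, l ∈ Set.Ioo (0:ℝ) T →
      δ * (n:ℝ)^(-γ) ≤ vnorm μ q ({x : Euc d | l < ‖fn x‖}.indicator fun _ => (1:ℝ)) := by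
    intro l hl
    refine le_trans part1 ?_
    refine vnorm_mono' μ q hq0 _ _ (hind _ _ ?_) (hne _)
    intro x hx
    have hx1 : φ ((n:ℝ) • x) = 1 := hx
    show l < ‖fn x‖
    have hfx : fn x = T := by rw [hfndef]; simp [hx1]
    rw [hfx, Real.norm_eq_abs, abs_of_pos hT0]
    exact hl.2
  set M : ℝ := T * (Cφ + 1) with hMdef
  have hM0 : 0 < M := by rw [hMdef]; positivity
  have hfnbd : ∀ x : Euc d, ‖fn x‖ ≤ T * Cφ := by
    intro x
    have hfx : ‖fn x‖ = T * ‖φ ((n:ℝ) • x)‖ := by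
      rw [hfndef]
      simp only
      rw [norm_mul, Real.norm_eq_abs, abs_of_pos hT0]
    rw [hfx]
    exact mul_le_mul_of_nonneg_left (hCφ _) hT0.le
  have hVzero : ∀ l : ℝ, M < l →
      vnorm μ q ({x : Euc d | l < ‖fn x‖}.indicator fun _ => (1:ℝ)) = 0 := by
    intro l hl
    have hset : {x : Euc d | l < ‖fn x‖} = ∅ := by
      ext x
      simp only [Set.mem_setOf_eq, Set.mem_empty_iff_false, iff_false, not_lt]
      calc ‖fn x‖ ≤ T * Cφ := hfnbd x
        _ ≤ M := by rw [hMdef]; exact mul_le_mul_of_nonneg_left (by linarith) hT0.le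
        _ ≤ l := hl.le
    rw [hset]
    unfold vnorm
    have hSeq : {l' : ℝ | 0 < l' ∧
        (∫⁻ x, ENNReal.ofReal (‖(∅ : Set (Euc d)).indicator (fun _ => (1:ℝ)) x‖ / l') ^ q x ∂μ) ≤ 1}
        = Set.Ioi (0:ℝ) := by
      ext l'
      simp only [Set.mem_setOf_eq, Set.mem_Ioi, and_iff_left_iff_imp, Set.indicator_empty,
        Pi.zero_apply, norm_zero, zero_div, ENNReal.ofReal_zero]
      intro _
      have hz : ∀ᵐ x ∂μ, (0:ℝ≥0∞) ^ q x = 0 := by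
        filter_upwards [hq1] with x hx
        exact ENNReal.zero_rpow_of_pos (by linarith)
      rw [lintegral_congr_ae hz, lintegral_zero]
      exact zero_le_one
    rw [hSeq, csInf_Ioi]
  set F : ℝ → ℝ := fun l =>
      l ^ (p-1) * vnorm μ q ({x : Euc d | l < ‖fn x‖}.indicator fun _ => (1:ℝ)) ^ p with hFdef
  have hFmeas : Measurable F := by
    rw [hFdef]
    fun_prop
  have hF0 : ∀ l : ℝ, l ∈ Set.Ioi (0:ℝ) → 0 ≤ F l := by
    intro l hl
    rw [hFdef]
    exact mul_nonneg (Real.rpow_nonneg (le_of_lt hl) _) (Real.rpow_nonneg (hVnn l) _)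
  have hFIoc : IntegrableOn F (Set.Ioc 0 M) volume := by
    apply Measure.integrableOn_of_bounded (M := (max M 1)^(p-1) * L^p)
    · exact measure_Ioc_lt_top.ne
    · exact hFmeas.aestronglyMeasurable
    · filter_upwards [ae_restrict_mem measurableSet_Ioc] with l hl
      have h1 : 0 ≤ l := hl.1.le
      have h2 : l^(p-1) ≤ (max M 1)^(p-1) :=
        Real.rpow_le_rpow h1 (le_trans hl.2 (le_max_left _ _)) (by linarith)
      have h3 : vnorm μ q ({x : Euc d | l < ‖fn x‖}.indicator fun _ => (1:ℝ)) ^ p ≤ L^p :=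
        Real.rpow_le_rpow (hVnn l) (hVle l) (by linarith)
      rw [Real.norm_eq_abs, hFdef]
      have hnn : (0:ℝ) ≤ l^(p-1) *
          vnorm μ q ({x : Euc d | l < ‖fn x‖}.indicator fun _ => (1:ℝ)) ^ p :=
        mul_nonneg (Real.rpow_nonneg h1 _) (Real.rpow_nonneg (hVnn l) _)
      rw [abs_of_nonneg hnn]
      exact mul_le_mul h2 h3 (Real.rpow_nonneg (hVnn l) _) (Real.rpow_nonneg (by positivity) _)
  have hFIoi : IntegrableOn F (Set.Ioi M) volume := by
    apply integrableOn_zero.congr_fun ?_ measurableSet_Ioi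
    intro l hl
    show (0:ℝ) = F l
    rw [hFdef]
    simp only
    rw [hVzero l hl, Real.zero_rpow hp0.ne', mul_zero]
  have hFint : IntegrableOn F (Set.Ioi 0) volume := by
    apply (hFIoc.union hFIoi).mono_set
    intro l hl
    rcases le_or_gt l M with h | h
    · exact Or.inl ⟨hl, h⟩
    · exact Or.inr h
  have hGint : IntegrableOn (fun l : ℝ => l^(p-1) * (δ * (n:ℝ)^(-γ))^p)
      (Set.Ioo 0 T) volume := by
    have h1 : IntegrableOn (fun l : ℝ => l^(p-1)) (Set.Ioc 0 T) volume :=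
      (intervalIntegrable_iff_integrableOn_Ioc_of_le hT0.le).1
        (intervalIntegral.intervalIntegrable_rpow' (by linarith))
    exact (h1.mono_set Set.Ioo_subset_Ioc_self).mul_const _
  have hGF : ∀ l ∈ Set.Ioo (0:ℝ) T,
      (fun l : ℝ => l^(p-1) * (δ * (n:ℝ)^(-γ))^p) l ≤ F l := by
    intro l hl
    show l^(p-1) * (δ * (n:ℝ)^(-γ))^p ≤ F l
    rw [hFdef]
    simp only
    refine mul_le_mul_of_nonneg_left ?_ (Real.rpow_nonneg hl.1.le _)
    exact Real.rpow_le_rpow (by positivity) (hVlow l hl) hp0.le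
  have hIG : ∫ l in Set.Ioo (0:ℝ) T, l^(p-1) * (δ * (n:ℝ)^(-γ))^p
      = (δ * (n:ℝ)^(-γ))^p * (T^p / p) := by
    rw [← MeasureTheory.integral_Ioc_eq_integral_Ioo,
      ← intervalIntegral.integral_of_le hT0.le,
      intervalIntegral.integral_mul_const,
      integral_rpow (Or.inl (by linarith : (-1:ℝ) < p-1))]
    have hpp : p - 1 + 1 = p := by ring
    rw [hpp, Real.zero_rpow hp0.ne']
    ring
  have s1 : ∫ l in Set.Ioo (0:ℝ) T, (fun l : ℝ => l^(p-1) * (δ * (n:ℝ)^(-γ))^p) l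
      ≤ ∫ l in Set.Ioo (0:ℝ) T, F l :=
    setIntegral_mono_on hGint (hFint.mono_set (fun l hl => hl.1)) measurableSet_Ioo hGF
  have s2 : ∫ l in Set.Ioo (0:ℝ) T, F l ≤ ∫ l in Set.Ioi (0:ℝ), F l := by
    apply setIntegral_mono_set hFint
    · filter_upwards [ae_restrict_mem measurableSet_Ioi] with l hl
      exact hF0 l hl
    · exact HasSubset.Subset.eventuallyLE (fun l hl => hl.1)
  have hcanc : (δ * (n:ℝ)^(-γ)) * T = δ := by
    rw [hTdef, mul_assoc, ← Real.rpow_add hn0, neg_add_cancel, Real.rpow_zero, mul_one]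
  have hval : (δ * (n:ℝ)^(-γ))^p * (T^p / p) = δ^p / p := by
    calc (δ * (n:ℝ)^(-γ))^p * (T^p / p) = ((δ * (n:ℝ)^(-γ))^p * T^p) / p := by ring
      _ = ((δ * (n:ℝ)^(-γ)) * T)^p / p := by
          rw [← Real.mul_rpow (by positivity) hT0.le]
      _ = δ^p / p := by rw [hcanc]
  have hlow2 : δ^p / p ≤ ∫ l in Set.Ioi (0:ℝ), F l := by
    have e1 : ∫ l in Set.Ioo (0:ℝ) T, (fun l : ℝ => l^(p-1) * (δ * (n:ℝ)^(-γ))^p) l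
        = δ^p / p := by rw [hIG, hval]
    linarith [s1, s2, e1.ge]
  have final : δ / p ^ ((1:ℝ)/p) ≤ (∫ l in Set.Ioi (0:ℝ), F l) ^ ((1:ℝ)/p) := by
    have e2 : δ / p ^ ((1:ℝ)/p) = (δ^p / p) ^ ((1:ℝ)/p) := by
      rw [Real.div_rpow (Real.rpow_nonneg hδ0.le p) hp0.le]
      rw [← Real.rpow_mul hδ0.le, mul_one_div_cancel hp0.ne', Real.rpow_one]
    rw [e2]
    exact Real.rpow_le_rpow (by positivity) hlow2 (by positivity)
  have hlor : lorentz μ q p fn = (∫ l in Set.Ioi (0:ℝ), F l) ^ ((1:ℝ)/p) := by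
    rw [hFdef]
    rfl
  rw [hlor]
  exact final
end
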